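/- arXiv:1908.00196 — 3 statements merged into one kernel-verified Lean document; each statement's English description precedes it below -/
import Mathlib

section
/- Let Δ_n = ∏_{1≤i<j≤n}(x_i − x_j) be the Vandermonde determinant and s_λ the Schur polynomial in n variables. With respect to the apolar (Bombieri) inner product ⟨f,g⟩ = constant term of f̄(∂)g on k[x_1,...,x_n], one has ⟨s_λΔ_n, s_μΔ_n⟩ = (λ+δ_n)! · n! · δ_{λμ}, where δ_n = (n−1, n−2, ..., 0) and (λ+δ_n)! = ∏_j (λ_j + n − j)!. -/
/-!
The apolar pairing is diagonal on monomials: `⟨x^α, x^β⟩ = α! δ_{αβ}`, because `∂^α x^β` has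
constant term `α!` if `α = β` and `0` otherwise. The bialternant `s_λ Δₙ` is the signed sum of
the `n!` monomials `∏ⱼ x_{σ(j)}^{λⱼ+n-j}`. Since `λ + δₙ` is strictly decreasing, these
exponents are pairwise distinct, and none of them is an exponent of `s_μ Δₙ` when `λ ≠ μ`.
Hence the pairing is `Σ_σ sgn(σ)² (λ+δₙ)! = n! (λ+δₙ)!` if `λ = μ`, and `0` otherwise.
-/

open MvPolynomial

variable (n : ℕ)

/-- The Vandermonde determinant `Δₙ = ∏_{i<j} (xᵢ - xⱼ)`. -/
noncomputable def vandermonde : MvPolynomial (Fin n) ℂ :=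
  ∏ p ∈ Finset.univ.filter (fun p : Fin n × Fin n => p.1 < p.2), (X p.1 - X p.2)

/-- The bialternant `det(xᵢ^{λⱼ+n-j}) = Σ_{σ∈Sₙ} sgn(σ) ∏ⱼ x_{σ(j)}^{λⱼ+n-j}`,
which equals `s_λ Δₙ`. -/
noncomputable def bialternant (l : Fin n → ℕ) : MvPolynomial (Fin n) ℂ :=
  ∑ σ : Equiv.Perm (Fin n),
    ((Equiv.Perm.sign σ : ℤ) : ℂ) • ∏ j : Fin n, X (σ j) ^ (l j + (n - 1 - (j : ℕ)))

/-- The differential operator attached to a monomial exponent `α`: `∏ᵢ ∂ᵢ^{αᵢ}`. -/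
noncomputable def diffOpMon (α : Fin n →₀ ℕ) :
    Module.End ℂ (MvPolynomial (Fin n) ℂ) :=
  ((List.finRange n).map fun i =>
    ((pderiv i : Derivation ℂ (MvPolynomial (Fin n) ℂ) _).toLinearMap) ^ (α i)).prod

/-- The apolar (Bombieri) inner product `⟨f,g⟩` = constant term of `f̄(∂)(g)`. -/
noncomputable def apolar (f g : MvPolynomial (Fin n) ℂ) : ℂ :=
  coeff 0 (∑ α ∈ f.support, (starRingEnd ℂ) (coeff α f) • (diffOpMon n α g))

section PDeriv

variable {σ R : Type*} [CommSemiring R]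

theorem coeff_pderiv_pow (i : σ) (k : ℕ) (p : MvPolynomial σ R) (m : σ →₀ ℕ) :
    coeff m (((pderiv i : Derivation R (MvPolynomial σ R) _).toLinearMap ^ k) p) =
      coeff (m + Finsupp.single i k) p * ((m i + k).descFactorial k : R) := by
  induction k generalizing m with
  | zero => simp
  | succ k ih =>
    have hexp : m + Finsupp.single i 1 + Finsupp.single i k = m + Finsupp.single i (k + 1) := by
      rw [add_assoc, ← Finsupp.single_add, add_comm 1 k]
    have hdeg : (m + Finsupp.single i 1 : σ →₀ ℕ) i + k = m i + (k + 1) := by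
      rw [Finsupp.add_apply, Finsupp.single_eq_same]; omega
    rw [pow_succ', Module.End.mul_apply, Derivation.coeFn_coe, coeff_pderiv, ih, hexp, hdeg,
      Nat.descFactorial_succ, show m i + (k + 1) - k = m i + 1 by omega]
    push_cast
    ring

theorem coeff_list_prod_pderiv_pow (α : σ →₀ ℕ) {L : List σ} (hL : L.Nodup)
    (p : MvPolynomial σ R) (m : σ →₀ ℕ) :
    coeff m ((L.map fun i =>
        (pderiv i : Derivation R (MvPolynomial σ R) _).toLinearMap ^ α i).prod p) =
      coeff (m + (L.map fun i => Finsupp.single i (α i)).sum) p *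
        (L.map fun i => ((m i + α i).descFactorial (α i) : R)).prod := by
  induction L generalizing m with
  | nil => simp
  | cons i L ih =>
    obtain ⟨hi, hL⟩ := List.nodup_cons.mp hL
    have hm : ∀ j ∈ L, (m + Finsupp.single i (α i)) j = m j := fun j hj => by
      simp [Finsupp.single_eq_of_ne (ne_of_mem_of_not_mem hj hi)]
    have hprod :
        (L.map fun j => (((m + Finsupp.single i (α i)) j + α j).descFactorial (α j) : R)).prod =
          (L.map fun j => ((m j + α j).descFactorial (α j) : R)).prod :=
      congrArg List.prod (List.map_congr_left fun j hj => by rw [hm j hj])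
    rw [List.map_cons, List.prod_cons, Module.End.mul_apply, coeff_pderiv_pow, ih hL, hprod]
    simp only [List.map_cons, List.sum_cons, List.prod_cons, add_assoc]
    ring

end PDeriv

theorem coeff_zero_diffOpMon (α : Fin n →₀ ℕ) (g : MvPolynomial (Fin n) ℂ) :
    coeff 0 (diffOpMon n α g) = coeff α g * ∏ i, ((α i).factorial : ℂ) := by
  rw [diffOpMon, coeff_list_prod_pderiv_pow α (List.nodup_finRange n), ← Fin.sum_univ_def,
    ← Fin.prod_univ_def, Finsupp.univ_sum_single]
  simp [Nat.descFactorial_self]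

theorem apolar_eq_sum (f g : MvPolynomial (Fin n) ℂ) :
    apolar n f g =
      ∑ α ∈ f.support, starRingEnd ℂ (coeff α f) * coeff α g * ∏ i, ((α i).factorial : ℂ) := by
  simp [apolar, coeff_sum, coeff_zero_diffOpMon, mul_assoc]

theorem apolar_sum_monomial_right {ι : Type*} (s : Finset ι) (e : ι → Fin n →₀ ℕ) (c : ι → ℂ)
    (f : MvPolynomial (Fin n) ℂ) :
    apolar n f (∑ t ∈ s, monomial (e t) (c t)) =
      ∑ t ∈ s, starRingEnd ℂ (coeff (e t) f) * c t * ∏ i, ((e t i).factorial : ℂ) := by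
  classical
  simp_rw [apolar_eq_sum, coeff_sum, coeff_monomial, Finset.mul_sum, Finset.sum_mul]
  rw [Finset.sum_comm]
  refine Finset.sum_congr rfl fun t _ => ?_
  simp_rw [mul_ite, ite_mul, mul_zero, zero_mul]
  rw [Finset.sum_ite_eq]
  split_ifs with h
  · rfl
  · simp [notMem_support_iff.mp h]

theorem Equiv.Perm.eq_one_of_strictAnti_comp {ι α : Type*} [Finite ι] [LinearOrder ι]
    [LinearOrder α] {a b : ι → α} (ha : StrictAnti a) (hb : StrictAnti b) {π : Equiv.Perm ι}
    (h : a ∘ π = b) : π = 1 := by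
  have hπ : StrictMono π := fun j j' hjj' => by
    have := hb hjj'
    rw [← h] at this
    exact ha.lt_iff_gt.mp this
  exact Equiv.ext (congrFun hπ.eq_id)

section PermExponent

variable {ι : Type*} [Fintype ι]

/-- The exponent vector of the monomial `∏ⱼ x_{σ(j)}^{a(j)}`. -/
noncomputable def permExponent (a : ι → ℕ) (σ : Equiv.Perm ι) : ι →₀ ℕ :=
  Finsupp.equivFunOnFinite.symm (a ∘ σ.symm)

theorem prod_X_pow_eq_monomial_permExponent {R : Type*} [CommSemiring R] (a : ι → ℕ)
    (σ : Equiv.Perm ι) :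
    ∏ j, (X (σ j) : MvPolynomial ι R) ^ a j = monomial (permExponent a σ) 1 := by
  rw [monomial_eq, C_1, one_mul, Finsupp.prod_fintype _ _ fun _ => pow_zero _]
  simpa [permExponent] using (Equiv.prod_comp σ fun i => (X i : MvPolynomial ι R) ^ a (σ.symm i))

theorem prod_permExponent {M : Type*} [CommMonoid M] (g : ℕ → M) (a : ι → ℕ)
    (σ : Equiv.Perm ι) : ∏ i, g (permExponent a σ i) = ∏ j, g (a j) := by
  simpa [permExponent] using Equiv.prod_comp σ.symm (g ∘ a)

theorem permExponent_eq_iff [LinearOrder ι] {a b : ι → ℕ} (ha : StrictAnti a)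
    (hb : StrictAnti b) {σ τ : Equiv.Perm ι} :
    permExponent a σ = permExponent b τ ↔ a = b ∧ σ = τ := by
  refine ⟨fun h => ?_, by rintro ⟨rfl, rfl⟩; rfl⟩
  have hcomp : a ∘ (σ⁻¹ * τ : Equiv.Perm ι) = b := by
    have := congrArg (· ∘ τ) (Finsupp.equivFunOnFinite.symm.injective h)
    simpa [Function.comp_def, Equiv.Perm.inv_def] using this
  have hστ : σ = τ := inv_mul_eq_one.mp (Equiv.Perm.eq_one_of_strictAnti_comp ha hb hcomp)
  subst hστ
  simpa using hcomp

end PermExponent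

/-- `λ + δₙ`, with `δₙ = (n-1, n-2, …, 0)`. -/
def addStaircase (l : Fin n → ℕ) : Fin n → ℕ := fun j => l j + (n - 1 - (j : ℕ))

theorem addStaircase_strictAnti {l : Fin n → ℕ} (hl : Antitone l) :
    StrictAnti (addStaircase n l) := fun j j' h => by
  have : l j' ≤ l j := hl h.le
  have : (j : ℕ) < j' := h
  have : (j' : ℕ) < n := j'.isLt
  simp only [addStaircase]
  omega

theorem addStaircase_injective : Function.Injective (addStaircase n) := fun l m h =>
  funext fun j => by simpa [addStaircase] using congrFun h j

theorem bialternant_eq_sum_monomial (l : Fin n → ℕ) :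
    bialternant n l =
      ∑ σ : Equiv.Perm (Fin n),
        monomial (permExponent (addStaircase n l) σ) ((Equiv.Perm.sign σ : ℤ) : ℂ) := by
  refine Finset.sum_congr rfl fun σ _ => ?_
  rw [show ∏ j, (X (σ j) : MvPolynomial (Fin n) ℂ) ^ (l j + (n - 1 - (j : ℕ))) =
      monomial (permExponent (addStaircase n l) σ) 1 from
    prod_X_pow_eq_monomial_permExponent _ σ, smul_monomial, smul_eq_mul, mul_one]

theorem coeff_permExponent_bialternant {l m : Fin n → ℕ} (hl : Antitone l) (hm : Antitone m)
    (τ : Equiv.Perm (Fin n)) :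
    coeff (permExponent (addStaircase n m) τ) (bialternant n l) =
      if l = m then ((Equiv.Perm.sign τ : ℤ) : ℂ) else 0 := by
  classical
  simp only [bialternant_eq_sum_monomial, coeff_sum, coeff_monomial,
    permExponent_eq_iff (addStaircase_strictAnti n hl) (addStaircase_strictAnti n hm),
    (addStaircase_injective n).eq_iff]
  split_ifs with hlm <;> simp [hlm]

theorem apolar_bialternant {l m : Fin n → ℕ} (hl : Antitone l) (hm : Antitone m) :
    apolar n (bialternant n l) (bialternant n m) =
      (∏ j, ((addStaircase n l j).factorial : ℂ)) * n.factorial * if l = m then 1 else 0 := by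
  rw [bialternant_eq_sum_monomial n m, apolar_sum_monomial_right]
  simp_rw [coeff_permExponent_bialternant n hl hm, prod_permExponent (fun k => (k.factorial : ℂ))]
  split_ifs with hlm
  · subst hlm
    simp [← mul_assoc, ← Int.cast_mul, Int.units_coe_mul_self, Finset.card_univ,
      Fintype.card_perm, mul_comm]
  · simp

/-- `⟨s_λΔₙ, s_μΔₙ⟩ = (λ+δₙ)! · n! · δ_{λμ}`, where the Schur polynomials `s_λ, s_μ`
are characterized by the bialternant formula `s_λ · Δₙ = det(xᵢ^{λⱼ+n-j})`. -/
theorem apolar_schur_vandermonde (l m : Fin n → ℕ) (hl : Antitone l) (hm : Antitone m)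
    (sl sm : MvPolynomial (Fin n) ℂ)
    (hsl : sl * vandermonde n = bialternant n l)
    (hsm : sm * vandermonde n = bialternant n m) :
    apolar n (sl * vandermonde n) (sm * vandermonde n) =
      (∏ j : Fin n, ((l j + (n - 1 - (j : ℕ))).factorial : ℂ)) * (n.factorial : ℂ) *
        (if l = m then 1 else 0) := by
  rw [hsl, hsm]
  exact apolar_bialternant n hl hm
end

section
/- For a unitary matrix σ ∈ U(n,k) acting on polynomials, and for the action f·g := f̄(∂_1,...,∂_n)(g) of polynomials on polynomials by conjugated differential operators, equivariance holds: σ(f·g) = σ(f)·σ(g) for all f, g ∈ k[x_1,...,x_n]. -/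
open MvPolynomial

variable (n : ℕ)

/-- The substitution action of a matrix `M` on `ℂ[x₁,…,xₙ]`: `xᵢ ↦ Σⱼ Mᵢⱼ xⱼ`. -/
noncomputable def matAct (M : Matrix (Fin n) (Fin n) ℂ) :
    MvPolynomial (Fin n) ℂ →ₐ[ℂ] MvPolynomial (Fin n) ℂ :=
  aeval fun i => ∑ j : Fin n, C (M i j) * X j

/-- The action `f · g := f̄(∂₁,…,∂ₙ)(g)` of polynomials on polynomials by
conjugated differential operators. -/
noncomputable def cdot (f g : MvPolynomial (Fin n) ℂ) : MvPolynomial (Fin n) ℂ :=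
  ∑ α ∈ f.support, (starRingEnd ℂ) (coeff α f) • (diffOpMon n α g)

/-!
Both sides are additive and conjugate-linear in `f`, so by induction on `f` it suffices to pass
from `f` to `f * X i`. Since `(f * X i) · g = f · ∂ᵢ g` and `σ (X i) = Σⱼ Uᵢⱼ Xⱼ`, this reduces to
the identity `σ ∘ ∂ᵢ = (Σⱼ conj Uᵢⱼ ∂ⱼ) ∘ σ`, which is the chain rule `∂ⱼ ∘ σ = Σₖ Uₖⱼ σ ∘ ∂ₖ`
combined with `U Uᴴ = 1`.
-/

namespace MvPolynomial

variable {R σ τ : Type*} [CommSemiring R]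

theorem pderiv_pderiv_comm (i j : σ) (f : MvPolynomial σ R) :
    pderiv i (pderiv j f) = pderiv j (pderiv i f) := by
  induction f using MvPolynomial.induction_on with
  | C a => simp
  | add p q hp hq => simp [hp, hq]
  | mul_X p k hp =>
    simp only [pderiv_mul, map_add, hp]
    rcases eq_or_ne k i with rfl | hki <;> rcases eq_or_ne k j with rfl | hkj <;>
      simp [pderiv_X_of_ne, *]

theorem pderiv_aeval [Fintype σ] (φ : σ → MvPolynomial τ R) (g : MvPolynomial σ R) (j : τ) :
    pderiv j (aeval φ g) = ∑ k, pderiv j (φ k) * aeval φ (pderiv k g) := by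
  classical
  induction g using MvPolynomial.induction_on with
  | C a => simp
  | add p q hp hq => simp only [map_add, hp, hq, mul_add, Finset.sum_add_distrib]
  | mul_X p i hp =>
    simp only [map_mul, aeval_X, pderiv_mul, hp, map_add, pderiv_X, Pi.single_apply, mul_add,
      Finset.sum_add_distrib, Finset.sum_mul]
    simp [mul_comm, mul_assoc]

end MvPolynomial

theorem List.prod_map_pow_add_single {ι M : Type*} [Monoid M] (p : ι → M) (α : ι →₀ ℕ)
    {i : ι} (hcomm : ∀ j, Commute (p i) (p j)) {l : List ι} (hl : l.Nodup) (hi : i ∈ l) :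
    (l.map fun j => p j ^ (α + Finsupp.single i 1 : ι →₀ ℕ) j).prod =
      (l.map fun j => p j ^ α j).prod * p i := by
  induction l with
  | nil => simp at hi
  | cons b t ih =>
    obtain ⟨hbt, ht⟩ := List.nodup_cons.mp hl
    rcases eq_or_ne b i with rfl | hbi
    · have htail : (t.map fun j => p j ^ (α + Finsupp.single b 1 : ι →₀ ℕ) j) =
          t.map fun j => p j ^ α j :=
        List.map_congr_left fun j hj => by
          rw [Finsupp.add_apply, Finsupp.single_eq_of_ne (by rintro rfl; exact hbt hj), add_zero]
      have hT : Commute (p b) (t.map fun j => p j ^ α j).prod :=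
        Commute.list_prod_right _ _ fun x hx => by
          obtain ⟨j, -, rfl⟩ := List.mem_map.mp hx
          exact (hcomm j).pow_right _
      simp only [List.map_cons, List.prod_cons, htail]
      rw [Finsupp.add_apply, Finsupp.single_eq_same, pow_succ, mul_assoc, hT.eq, mul_assoc]
    · have hit : i ∈ t := (List.mem_cons.mp hi).resolve_left (Ne.symm hbi)
      simp only [List.map_cons, List.prod_cons, ih ht hit]
      rw [Finsupp.add_apply, Finsupp.single_eq_of_ne hbi, add_zero, mul_assoc]

section

variable {n}

theorem diffOpMon_zero : diffOpMon n 0 = 1 := by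
  simp [diffOpMon, List.prod_eq_one]

theorem diffOpMon_add_single (α : Fin n →₀ ℕ) (i : Fin n) :
    diffOpMon n (α + Finsupp.single i 1) =
      diffOpMon n α * (pderiv i : Derivation ℂ (MvPolynomial (Fin n) ℂ) _).toLinearMap :=
  List.prod_map_pow_add_single _ α
    (fun j => LinearMap.ext fun f => pderiv_pderiv_comm i j f)
    (List.nodup_finRange n) (List.mem_finRange i)

theorem cdot_eq_sum_of_support_subset {f : MvPolynomial (Fin n) ℂ} {s : Finset (Fin n →₀ ℕ)}
    (hs : f.support ⊆ s) (g : MvPolynomial (Fin n) ℂ) :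
    cdot n f g = ∑ α ∈ s, starRingEnd ℂ (coeff α f) • diffOpMon n α g :=
  Finset.sum_subset hs fun α _ hα => by simp [notMem_support_iff.mp hα]

theorem cdot_add_left (f₁ f₂ g : MvPolynomial (Fin n) ℂ) :
    cdot n (f₁ + f₂) g = cdot n f₁ g + cdot n f₂ g := by
  rw [cdot_eq_sum_of_support_subset support_add, cdot_eq_sum_of_support_subset
    Finset.subset_union_left, cdot_eq_sum_of_support_subset Finset.subset_union_right,
    ← Finset.sum_add_distrib]
  simp only [coeff_add, map_add, add_smul]

theorem cdot_sum_left {ι : Type*} (s : Finset ι) (f : ι → MvPolynomial (Fin n) ℂ)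
    (g : MvPolynomial (Fin n) ℂ) :
    cdot n (∑ k ∈ s, f k) g = ∑ k ∈ s, cdot n (f k) g :=
  map_sum (AddMonoidHom.mk' (cdot n · g) (cdot_add_left · · g)) f s

theorem cdot_C_mul (c : ℂ) (f g : MvPolynomial (Fin n) ℂ) :
    cdot n (C c * f) g = starRingEnd ℂ c • cdot n f g := by
  rw [← smul_eq_C_mul, cdot_eq_sum_of_support_subset support_smul, cdot, Finset.smul_sum]
  simp only [coeff_smul, smul_eq_mul, map_mul, smul_smul]

theorem cdot_mul_X (f g : MvPolynomial (Fin n) ℂ) (i : Fin n) :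
    cdot n (f * X i) g = cdot n f (pderiv i g) := by
  simp only [cdot, support_mul_X, Finset.sum_map, addRightEmbedding_apply, coeff_mul_X,
    diffOpMon_add_single, Module.End.mul_apply]
  rfl

theorem cdot_C (c : ℂ) (g : MvPolynomial (Fin n) ℂ) :
    cdot n (C c) g = starRingEnd ℂ c • g := by
  rw [C_apply, cdot_eq_sum_of_support_subset support_monomial_subset, Finset.sum_singleton,
    coeff_monomial, if_pos rfl, diffOpMon_zero, Module.End.one_apply]

theorem cdot_sum_right {ι : Type*} (s : Finset ι) (f : MvPolynomial (Fin n) ℂ)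
    (g : ι → MvPolynomial (Fin n) ℂ) :
    cdot n f (∑ k ∈ s, g k) = ∑ k ∈ s, cdot n f (g k) := by
  simp only [cdot, map_sum, Finset.smul_sum]
  exact Finset.sum_comm

theorem cdot_smul_right (c : ℂ) (f g : MvPolynomial (Fin n) ℂ) :
    cdot n f (c • g) = c • cdot n f g := by
  simp only [cdot, map_smul, Finset.smul_sum, smul_comm c]

theorem cdot_mul_sum_C_mul_X (v : Fin n → ℂ) (f g : MvPolynomial (Fin n) ℂ) :
    cdot n (f * ∑ j, C (v j) * X j) g = cdot n f (∑ j, starRingEnd ℂ (v j) • pderiv j g) := by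
  simp only [Finset.mul_sum, mul_left_comm f, cdot_sum_left, cdot_C_mul, cdot_mul_X,
    cdot_sum_right, cdot_smul_right]

theorem matAct_X (U : Matrix (Fin n) (Fin n) ℂ) (i : Fin n) :
    matAct n U (X i) = ∑ j, C (U i j) * X j :=
  aeval_X _ i

theorem pderiv_matAct (U : Matrix (Fin n) (Fin n) ℂ) (g : MvPolynomial (Fin n) ℂ) (j : Fin n) :
    pderiv j (matAct n U g) = ∑ k, U k j • matAct n U (pderiv k g) := by
  simp only [matAct, pderiv_aeval, map_sum, pderiv_C_mul, pderiv_X, Pi.single_apply,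
    mul_ite, mul_one, mul_zero, Finset.sum_ite_eq', Finset.mem_univ, if_true, smul_eq_C_mul]

theorem matAct_pderiv_of_mem_unitaryGroup {U : Matrix (Fin n) (Fin n) ℂ}
    (hU : U ∈ Matrix.unitaryGroup (Fin n) ℂ) (g : MvPolynomial (Fin n) ℂ) (i : Fin n) :
    matAct n U (pderiv i g) = ∑ j, starRingEnd ℂ (U i j) • pderiv j (matAct n U g) := by
  have hrow : ∀ k, ∑ j, starRingEnd ℂ (U i j) * U k j = if k = i then 1 else 0 := fun k => by
    simpa [Matrix.mul_apply, Matrix.one_apply, Matrix.star_eq_conjTranspose, mul_comm] using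
      congrFun (congrFun (Matrix.mem_unitaryGroup_iff.mp hU) k) i
  simp only [pderiv_matAct, Finset.smul_sum, smul_smul]
  rw [Finset.sum_comm]
  simp only [← Finset.sum_smul, hrow, ite_smul, one_smul, zero_smul, Finset.sum_ite_eq',
    Finset.mem_univ, if_true]

end

/-- Equivariance of the `·` action under unitary substitutions:
`σ(f·g) = σ(f)·σ(g)`. -/
theorem unitary_cdot_equivariant (U : Matrix (Fin n) (Fin n) ℂ)
    (hU : U ∈ Matrix.unitaryGroup (Fin n) ℂ) (f g : MvPolynomial (Fin n) ℂ) :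
    matAct n U (cdot n f g) = cdot n (matAct n U f) (matAct n U g) := by
  induction f using MvPolynomial.induction_on generalizing g with
  | C a =>
    rw [cdot_C, map_smul, ← algebraMap_eq, AlgHom.commutes, algebraMap_eq, cdot_C]
  | add p q hp hq =>
    rw [cdot_add_left, map_add, hp, hq, map_add, cdot_add_left]
  | mul_X p i hp =>
    rw [cdot_mul_X, hp, map_mul, matAct_X, cdot_mul_sum_C_mul_X,
      matAct_pderiv_of_mem_unitaryGroup hU]
end

section
/- For disjoint I, J ⊆ [n] = {1,...,n}, the sign identity deg([n]\J) + inv(I,J) ≡ inv(I,[n]\J) + deg([n]\(I∪J)) (mod 2) holds, where deg(S) = Σ_{s∈S}(s−1) and inv(A,B) = #{(a,b) ∈ A×B : b < a}. -/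
open Finset

/-- `invPairs A B` counts pairs `(a,b) ∈ A × B` with `b < a`. -/
def invPairs (A B : Finset ℕ) : ℕ := ((A ×ˢ B).filter fun p => p.2 < p.1).card

/-- `degSet S = Σ_{s ∈ S} (s-1)`. -/
def degSet (S : Finset ℕ) : ℕ := ∑ s ∈ S, (s - 1)

/-!
Since `I ⊆ [n] \ J`, we have `deg([n] \ J) = deg([n] \ (I ∪ J)) + deg I`, and splitting `[n]` into
`J` and `[n] \ J` gives `inv(I, J) + inv(I, [n] \ J) = inv(I, [n]) = deg I`. Hence the two sides
differ by exactly `2 inv(I, J)`.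
-/

theorem invPairs_eq_sum (A B : Finset ℕ) :
    invPairs A B = ∑ a ∈ A, #(B.filter (· < a)) := by
  rw [invPairs, card_filter, sum_product]
  exact sum_congr rfl fun a _ => (card_filter _ _).symm

theorem invPairs_union_right (A : Finset ℕ) {B C : Finset ℕ} (h : Disjoint B C) :
    invPairs A (B ∪ C) = invPairs A B + invPairs A C := by
  simp only [invPairs_eq_sum, ← sum_add_distrib, filter_union]
  exact sum_congr rfl fun a _ => card_union_of_disjoint (disjoint_filter_filter h)

theorem card_filter_Icc_one_lt {n a : ℕ} (ha : a ≤ n + 1) :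
    #((Icc 1 n).filter (· < a)) = a - 1 := by
  have : (Icc 1 n).filter (· < a) = Icc 1 (a - 1) := by
    ext b
    simp only [mem_filter, mem_Icc]
    omega
  rw [this, Nat.card_Icc, Nat.add_sub_cancel]

theorem invPairs_Icc_one {n : ℕ} {I : Finset ℕ} (hI : ∀ a ∈ I, a ≤ n + 1) :
    invPairs I (Icc 1 n) = degSet I := by
  rw [invPairs_eq_sum]
  exact sum_congr rfl fun a ha => card_filter_Icc_one_lt (hI a ha)

theorem degSet_sdiff_add {I S : Finset ℕ} (h : I ⊆ S) :
    degSet (S \ I) + degSet I = degSet S :=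
  sum_sdiff h

/-- For disjoint `I, J ⊆ [n]`:
`deg([n]∖J) + inv(I,J) ≡ inv(I,[n]∖J) + deg([n]∖(I∪J)) (mod 2)`. -/
theorem hodge_sign_identity (n : ℕ) (I J : Finset ℕ)
    (hI : I ⊆ Finset.Icc 1 n) (hJ : J ⊆ Finset.Icc 1 n) (hdisj : Disjoint I J) :
    degSet (Finset.Icc 1 n \ J) + invPairs I J ≡
      invPairs I (Finset.Icc 1 n \ J) + degSet (Finset.Icc 1 n \ (I ∪ J)) [MOD 2] := by
  have hdeg : degSet (Icc 1 n \ (I ∪ J)) + degSet I = degSet (Icc 1 n \ J) := by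
    rw [sdiff_union_distrib, inter_comm, ← Finset.sdiff_sdiff_left']
    exact degSet_sdiff_add (subset_sdiff.mpr ⟨hI, hdisj⟩)
  have hinv : invPairs I J + invPairs I (Icc 1 n \ J) = degSet I := by
    rw [← invPairs_union_right I disjoint_sdiff, union_sdiff_of_subset hJ]
    exact invPairs_Icc_one fun a ha => (mem_Icc.mp (hI ha)).2.trans n.le_succ
  have hgap : degSet (Icc 1 n \ J) + invPairs I J =
      invPairs I (Icc 1 n \ J) + degSet (Icc 1 n \ (I ∪ J)) + 2 * invPairs I J := by
    omega
  rw [hgap]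
  exact Nat.add_mul_mod_self_left _ 2 _
end
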